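/- arXiv:1708.05199 — 2 statements merged into one kernel-verified Lean document; each statement's English description precedes it below -/
import Mathlib

section
/- Let m and n be integers with n ≥ 2 and m − n ≥ 3 such that exactly one of m and n is even. Then for all i with 1 ≤ i ≤ m−1 and all j with 2 ≤ j ≤ n, the vertices v_{i,j} and v_{m−i, n−j+2} of M_{m,n} satisfy d(v_{i,j}, v_{1,1}) = d(v_{m−i,n−j+2}, v_{1,1}) and d(v_{i,j}, v_{m−1,1}) = d(v_{m−i,n−j+2}, v_{m−1,1}); consequently the set {v_{1,1}, v_{m−1,1}} is not a resolving set of M_{m,n}. -/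
/-- The relation generating the edges of the generalized Möbius ladder `M_{m,n}`:
horizontal edges `{(i,j),(i+1,j)}`, vertical edges `{(i,j),(i,j+1)}`, and the
twisted edges `{(m-1,j),(1,n+1-j)}`. -/
def gmlRel (m n : ℕ) (u v : ℕ × ℕ) : Prop :=
  (u.2 = v.2 ∧ v.1 = u.1 + 1) ∨
  (u.1 = v.1 ∧ v.2 = u.2 + 1) ∨
  (u.1 = m - 1 ∧ v.1 = 1 ∧ u.2 + v.2 = n + 1)

/-- The vertex set `{(i,j) : 1 ≤ i ≤ m-1, 1 ≤ j ≤ n}` of `M_{m,n}`. -/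
abbrev GMLVert (m n : ℕ) : Type :=
  {p : ℕ × ℕ // 1 ≤ p.1 ∧ p.1 ≤ m - 1 ∧ 1 ≤ p.2 ∧ p.2 ≤ n}

/-- The generalized Möbius ladder `M_{m,n}` as a simple graph. -/
def GML (m n : ℕ) : SimpleGraph (GMLVert m n) :=
  SimpleGraph.fromRel (fun u v => gmlRel m n u.val v.val)

/-- `W` is a resolving set of `M_{m,n}`: distinct vertices have distinct
tuples of distances to the elements of `W`. -/
def IsResolving (m n : ℕ) (W : Set (GMLVert m n)) : Prop :=
  ∀ u v : GMLVert m n,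
    (∀ w ∈ W, (GML m n).dist u w = (GML m n).dist v w) → u = v

/-- The metric dimension of `M_{m,n}`: the minimum cardinality of a resolving set. -/
noncomputable def metricDim (m n : ℕ) : ℕ :=
  sInf {k : ℕ | ∃ W : Finset (GMLVert m n), W.card = k ∧ IsResolving m n ↑W}

/-! ### Auxiliary material -/

/-- Potential computing the distance to `(1,1)`. -/
def phi1 (m n : ℕ) (p : ℕ × ℕ) : ℕ := min (p.1 + p.2 - 2) (m + n - p.1 - p.2)

/-- Potential computing the distance to `(m-1,1)`. -/
def phi2 (m n : ℕ) (p : ℕ × ℕ) : ℕ := min (m - p.1 + p.2 - 2) (p.1 + n - p.2)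

lemma val_mk {m n : ℕ} {p : ℕ × ℕ} {h} : ((⟨p, h⟩ : GMLVert m n) : ℕ × ℕ) = p := rfl

lemma gml_adj {m n : ℕ} {u v : GMLVert m n} (hne : u.val ≠ v.val)
    (h : gmlRel m n u.val v.val ∨ gmlRel m n v.val u.val) :
    (GML m n).Adj u v := by
  rw [GML, SimpleGraph.fromRel_adj]
  exact ⟨fun e => hne (congrArg Subtype.val e), h⟩

lemma phi1_lip {m n : ℕ} (hn : 2 ≤ n) (hm : n + 3 ≤ m) {u v : GMLVert m n}
    (h : (GML m n).Adj u v) : phi1 m n u.val ≤ phi1 m n v.val + 1 := by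
  obtain ⟨⟨a, b⟩, ha1, ha2, ha3, ha4⟩ := u
  obtain ⟨⟨c, d⟩, hc1, hc2, hc3, hc4⟩ := v
  rw [GML, SimpleGraph.fromRel_adj] at h
  obtain ⟨-, h⟩ := h
  simp only [gmlRel, phi1, val_mk] at *
  omega

lemma phi2_lip {m n : ℕ} (hn : 2 ≤ n) (hm : n + 3 ≤ m) {u v : GMLVert m n}
    (h : (GML m n).Adj u v) : phi2 m n u.val ≤ phi2 m n v.val + 1 := by
  obtain ⟨⟨a, b⟩, ha1, ha2, ha3, ha4⟩ := u
  obtain ⟨⟨c, d⟩, hc1, hc2, hc3, hc4⟩ := v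
  rw [GML, SimpleGraph.fromRel_adj] at h
  obtain ⟨-, h⟩ := h
  simp only [gmlRel, phi2, val_mk] at *
  omega

lemma descent1 {m n : ℕ} (hn : 2 ≤ n) (hm : n + 3 ≤ m) (v : GMLVert m n)
    (hv : v.val ≠ ((1, 1) : ℕ × ℕ)) :
    ∃ v' : GMLVert m n, (GML m n).Adj v v' ∧ phi1 m n v'.val + 1 = phi1 m n v.val := by
  obtain ⟨hi1, hi2, hj1, hj2⟩ := v.2
  rw [Ne, Prod.ext_iff] at hv
  by_cases hc1 : v.val.1 = m - 1
  · -- twist edge to (1, n+1-j)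
    refine ⟨⟨(1, n + 1 - v.val.2), by omega⟩, gml_adj ?_
      (Or.inl (Or.inr (Or.inr ⟨hc1, rfl, ?_⟩))), ?_⟩
    · simp only [ne_eq, val_mk, Prod.ext_iff]; omega
    · simp only [val_mk]; omega
    · simp only [phi1, val_mk]; omega
  · by_cases hc2 : v.val.1 + v.val.2 - 2 ≤ m + n - v.val.1 - v.val.2
    · by_cases hc3 : 1 < v.val.1
      · refine ⟨⟨(v.val.1 - 1, v.val.2), by omega⟩, gml_adj ?_
          (Or.inr (Or.inl ⟨rfl, ?_⟩)), ?_⟩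
        · simp only [ne_eq, val_mk, Prod.ext_iff]; omega
        · simp only [val_mk]; omega
        · simp only [phi1, val_mk]; omega
      · -- i = 1, j > 1: go down
        refine ⟨⟨(v.val.1, v.val.2 - 1), by omega⟩, gml_adj ?_
          (Or.inr (Or.inr (Or.inl ⟨rfl, ?_⟩))), ?_⟩
        · simp only [ne_eq, val_mk, Prod.ext_iff]; omega
        · simp only [val_mk]; omega
        · simp only [phi1, val_mk]; omega
    · refine ⟨⟨(v.val.1 + 1, v.val.2), by omega⟩, gml_adj ?_
        (Or.inl (Or.inl ⟨rfl, rfl⟩)), ?_⟩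
      · simp only [ne_eq, val_mk, Prod.ext_iff]; omega
      · simp only [phi1, val_mk]; omega

lemma descent2 {m n : ℕ} (hn : 2 ≤ n) (hm : n + 3 ≤ m) (v : GMLVert m n)
    (hv : v.val ≠ ((m - 1, 1) : ℕ × ℕ)) :
    ∃ v' : GMLVert m n, (GML m n).Adj v v' ∧ phi2 m n v'.val + 1 = phi2 m n v.val := by
  obtain ⟨hi1, hi2, hj1, hj2⟩ := v.2
  rw [Ne, Prod.ext_iff] at hv
  by_cases hc1 : v.val.1 = 1
  · -- twist edge from (m-1, n+1-j) to (1, j)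
    refine ⟨⟨(m - 1, n + 1 - v.val.2), by omega⟩, gml_adj ?_
      (Or.inr (Or.inr (Or.inr ⟨rfl, hc1, ?_⟩))), ?_⟩
    · simp only [ne_eq, val_mk, Prod.ext_iff]; omega
    · simp only [val_mk]; omega
    · simp only [phi2, val_mk]; omega
  · by_cases hc2 : m - v.val.1 + v.val.2 - 2 ≤ v.val.1 + n - v.val.2
    · by_cases hc3 : v.val.1 < m - 1
      · refine ⟨⟨(v.val.1 + 1, v.val.2), by omega⟩, gml_adj ?_
          (Or.inl (Or.inl ⟨rfl, rfl⟩)), ?_⟩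
        · simp only [ne_eq, val_mk, Prod.ext_iff]; omega
        · simp only [phi2, val_mk]; omega
      · -- i = m-1, j > 1: go down
        refine ⟨⟨(v.val.1, v.val.2 - 1), by omega⟩, gml_adj ?_
          (Or.inr (Or.inr (Or.inl ⟨rfl, ?_⟩))), ?_⟩
        · simp only [ne_eq, val_mk, Prod.ext_iff]; omega
        · simp only [val_mk]; omega
        · simp only [phi2, val_mk]; omega
    · refine ⟨⟨(v.val.1 - 1, v.val.2), by omega⟩, gml_adj ?_
        (Or.inr (Or.inl ⟨rfl, ?_⟩)), ?_⟩
      · simp only [ne_eq, val_mk, Prod.ext_iff]; omega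
      · simp only [val_mk]; omega
      · simp only [phi2, val_mk]; omega

lemma walk_lb {m n : ℕ} (φ : GMLVert m n → ℕ)
    (hlip : ∀ u v : GMLVert m n, (GML m n).Adj u v → φ u ≤ φ v + 1)
    (w : GMLVert m n) (hw : φ w = 0) :
    ∀ (u : GMLVert m n) (p : (GML m n).Walk u w), φ u ≤ p.length := by
  intro u p
  induction p with
  | nil => omega
  | cons h q ih =>
    rw [SimpleGraph.Walk.length_cons]
    have := hlip _ _ h
    omega

/-- A potential which is 1-Lipschitz and admits gradient descent computes
the distance to its zero. -/
lemma gml_dist_eq {m n : ℕ} (φ : GMLVert m n → ℕ) (w : GMLVert m n)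
    (hlip : ∀ u v : GMLVert m n, (GML m n).Adj u v → φ u ≤ φ v + 1)
    (hdesc : ∀ v : GMLVert m n, v ≠ w →
      ∃ v', (GML m n).Adj v v' ∧ φ v' + 1 = φ v)
    (hw : φ w = 0) (v : GMLVert m n) :
    (GML m n).dist v w = φ v := by
  have upper : ∀ k (v : GMLVert m n), φ v ≤ k →
      (GML m n).Reachable v w ∧ (GML m n).dist v w ≤ φ v := by
    intro k
    induction k with
    | zero =>
      intro v hv
      by_cases hvw : v = w
      · subst hvw
        exact ⟨SimpleGraph.Reachable.refl v, by rw [SimpleGraph.dist_self]; omega⟩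
      · obtain ⟨v', _, hphi⟩ := hdesc v hvw
        omega
    | succ k ih =>
      intro v hv
      by_cases hvw : v = w
      · subst hvw
        exact ⟨SimpleGraph.Reachable.refl v, by rw [SimpleGraph.dist_self]; omega⟩
      · obtain ⟨v', hadj, hphi⟩ := hdesc v hvw
        obtain ⟨hr, hd⟩ := ih v' (by omega)
        refine ⟨hadj.reachable.trans hr, ?_⟩
        obtain ⟨p, hp⟩ := hr.exists_walk_length_eq_dist
        have hle := SimpleGraph.dist_le (SimpleGraph.Walk.cons hadj p)
        rw [SimpleGraph.Walk.length_cons, hp] at hle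
        omega
  obtain ⟨hr, hle⟩ := upper (φ v) v le_rfl
  refine le_antisymm hle ?_
  obtain ⟨p, hp⟩ := hr.exists_walk_length_eq_dist
  have := walk_lb φ hlip w hw v p
  omega

lemma dist_to_w1 {m n : ℕ} (hn : 2 ≤ n) (hm : n + 3 ≤ m) (v : GMLVert m n)
    (hw : 1 ≤ ((1, 1) : ℕ × ℕ).1 ∧ ((1, 1) : ℕ × ℕ).1 ≤ m - 1 ∧
      1 ≤ ((1, 1) : ℕ × ℕ).2 ∧ ((1, 1) : ℕ × ℕ).2 ≤ n) :
    (GML m n).dist v ⟨(1, 1), hw⟩ = phi1 m n v.val := by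
  refine gml_dist_eq (fun u => phi1 m n u.val) _ (fun u v h => phi1_lip hn hm h)
    (fun v hv => descent1 hn hm v (fun h => hv (Subtype.ext h))) ?_ v
  simp only [phi1, val_mk]
  omega

lemma dist_to_w2 {m n : ℕ} (hn : 2 ≤ n) (hm : n + 3 ≤ m) (v : GMLVert m n)
    (hw : 1 ≤ ((m - 1, 1) : ℕ × ℕ).1 ∧ ((m - 1, 1) : ℕ × ℕ).1 ≤ m - 1 ∧
      1 ≤ ((m - 1, 1) : ℕ × ℕ).2 ∧ ((m - 1, 1) : ℕ × ℕ).2 ≤ n) :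
    (GML m n).dist v ⟨(m - 1, 1), hw⟩ = phi2 m n v.val := by
  refine gml_dist_eq (fun u => phi2 m n u.val) _ (fun u v h => phi2_lip hn hm h)
    (fun v hv => descent2 hn hm v (fun h => hv (Subtype.ext h))) ?_ v
  simp only [phi2, val_mk]
  omega

theorem stmt9 (m n : ℕ) (hn : 2 ≤ n) (hm : n + 3 ≤ m) (hpar : Odd (m + n)) :
    (∀ i j : ℕ, ∀ _hi1 : 1 ≤ i, ∀ _hi2 : i ≤ m - 1, ∀ _hj1 : 2 ≤ j, ∀ _hj2 : j ≤ n,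
      (GML m n).dist ⟨(i, j), by omega⟩ ⟨(1, 1), by omega⟩ =
        (GML m n).dist ⟨(m - i, n - j + 2), by omega⟩ ⟨(1, 1), by omega⟩ ∧
      (GML m n).dist ⟨(i, j), by omega⟩ ⟨(m - 1, 1), by omega⟩ =
        (GML m n).dist ⟨(m - i, n - j + 2), by omega⟩ ⟨(m - 1, 1), by omega⟩) ∧
    ¬ IsResolving m n {⟨(1, 1), by omega⟩, ⟨(m - 1, 1), by omega⟩} := by
  constructor
  · intro i j hi1 hi2 hj1 hj2
    rw [dist_to_w1 hn hm, dist_to_w1 hn hm, dist_to_w2 hn hm, dist_to_w2 hn hm]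
    simp only [phi1, phi2, val_mk]
    constructor <;> omega
  · intro hres
    have h := hres ⟨(1, 2), by omega⟩ ⟨(m - 1, n), by omega⟩ ?_
    · have h2 := congrArg (fun x : GMLVert m n => x.val.1) h
      simp only [val_mk] at h2
      omega
    · intro w hw
      rcases hw with hw | hw
      · subst hw
        rw [dist_to_w1 hn hm, dist_to_w1 hn hm]
        simp only [phi1, val_mk]
        omega
      · rw [Set.mem_singleton_iff] at hw
        subst hw
        rw [dist_to_w2 hn hm, dist_to_w2 hn hm]
        simp only [phi2, val_mk]
        omega
end

section
/- Let m and n be integers with n ≥ 2 and m − n ≥ 4 such that m and n have the same parity. Then for every q with 1 ≤ q ≤ n and every i with 1 ≤ i ≤ m−1, the graph distance in M_{m,n} satisfies d(v_{m−1,n}, v_{i,q}) = d(v_{m−1,1}, v_{i,n+1−q}). -/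
def gmlFlip (m n : ℕ) : GMLVert m n ≃ GMLVert m n where
  toFun p := ⟨(p.val.1, n + 1 - p.val.2), ⟨p.2.1, p.2.2.1, by omega, by have := p.2.2.2; omega⟩⟩
  invFun p := ⟨(p.val.1, n + 1 - p.val.2), ⟨p.2.1, p.2.2.1, by omega, by have := p.2.2.2; omega⟩⟩
  left_inv p := Subtype.ext (Prod.ext rfl (by have := p.2.2.2; simp; omega))
  right_inv p := Subtype.ext (Prod.ext rfl (by have := p.2.2.2; simp; omega))

set_option maxHeartbeats 1000000 in
def gmlFlipIso (m n : ℕ) : GML m n ≃g GML m n where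
  toEquiv := gmlFlip m n
  map_rel_iff' := by
    rintro ⟨⟨a, b⟩, ha⟩ ⟨⟨c, d⟩, hc⟩
    obtain ⟨_, _, _, _⟩ := ha
    obtain ⟨_, _, _, _⟩ := hc
    simp only [GML, SimpleGraph.fromRel_adj, gmlRel, gmlFlip, ne_eq, Subtype.mk.injEq,
      Prod.mk.injEq, Equiv.coe_fn_mk]
    omega

lemma iso_edist_le {V W : Type*} {G : SimpleGraph V} {H : SimpleGraph W} (f : G ≃g H)
    (u v : V) : H.edist (f u) (f v) ≤ G.edist u v := by
  rw [SimpleGraph.edist_eq_sInf (G := G)]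
  refine le_sInf ?_
  rintro x ⟨w, rfl⟩
  have := SimpleGraph.edist_le (w.map f.toHom)
  simpa using this

lemma iso_dist_eq {V W : Type*} {G : SimpleGraph V} {H : SimpleGraph W} (f : G ≃g H)
    (u v : V) : H.dist (f u) (f v) = G.dist u v := by
  unfold SimpleGraph.dist
  congr 1
  refine le_antisymm (iso_edist_le f u v) ?_
  have := iso_edist_le f.symm (f u) (f v)
  simpa using this

theorem stmt15 (m n : ℕ) (hn : 2 ≤ n) (hm : n + 4 ≤ m) (hpar : Even (m + n))
    (q i : ℕ) (hq1 : 1 ≤ q) (hq2 : q ≤ n) (hi1 : 1 ≤ i) (hi2 : i ≤ m - 1) :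
    (GML m n).dist ⟨(m - 1, n), by omega⟩ ⟨(i, q), by omega⟩ =
      (GML m n).dist ⟨(m - 1, 1), by omega⟩ ⟨(i, n + 1 - q), by omega⟩ := by
  have h := iso_dist_eq (gmlFlipIso m n) ⟨(m - 1, n), by omega⟩ ⟨(i, q), by omega⟩
  rw [← h]
  congr 1 <;> (apply Subtype.ext; simp [gmlFlipIso, gmlFlip]; try omega)
end
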